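/- There exists a function f : ℝ → ℝ that is continuous everywhere but differentiable nowhere. -/

import Mathlib

/-!
The Takagi function `T x = ∑ₙ ‖2ⁿ x‖ / 2ⁿ`, with `‖y‖` the distance from `y` to the nearest
integer, is continuous as a uniformly convergent series. On the dyadic interval of length `2⁻ᵐ`
containing `x`, the summands with `n ≥ m` vanish at both endpoints and those with `n < m` are
affine with slope `±1`, so the chord slope of `T` over it is a sum of `m` signs. These intervals
straddle `x`, so if `T` were differentiable at `x` the chord slopes would converge to `T' x`;
but consecutive ones differ by exactly `1`.
-/

open Filter Topology Asymptotics Finset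

theorem HasDerivAt.tendsto_slope_of_straddle {E : Type*} [NormedAddCommGroup E] [NormedSpace ℝ E]
    {f : ℝ → E} {f' : E} {x : ℝ} (hf : HasDerivAt f f' x) {α : Type*} {l : Filter α}
    {u v : α → ℝ} (hu : Tendsto u l (𝓝 x)) (hv : Tendsto v l (𝓝 x))
    (hux : ∀ i, u i ≤ x) (hxv : ∀ i, x ≤ v i) (huv : ∀ i, u i < v i) :
    Tendsto (fun i => slope f (u i) (v i)) l (𝓝 f') := by
  have hlittle := hasDerivAt_iff_isLittleO.1 hf
  have hv_bound : (fun i => v i - x) =O[l] (fun i => v i - u i) :=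
    IsBigO.of_bound 1 (Eventually.of_forall fun i => by
      simp only [Real.norm_eq_abs, one_mul]
      rw [abs_of_nonneg (by linarith [hxv i]), abs_of_nonneg (by linarith [huv i])]
      linarith [hux i])
  have hu_bound : (fun i => u i - x) =O[l] (fun i => v i - u i) :=
    IsBigO.of_bound 1 (Eventually.of_forall fun i => by
      simp only [Real.norm_eq_abs, one_mul]
      rw [abs_of_nonpos (by linarith [hux i]), abs_of_nonneg (by linarith [huv i])]
      linarith [hxv i])
  have hchord : (fun i => f (v i) - f (u i) - (v i - u i) • f') =o[l] (fun i => v i - u i) := by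
    refine (((hlittle.comp_tendsto hv).trans_isBigO hv_bound).sub
      ((hlittle.comp_tendsto hu).trans_isBigO hu_bound)).congr_left fun i => ?_
    simp only [Function.comp_apply, sub_smul]
    abel
  refine tendsto_sub_nhds_zero_iff.1 (hchord.tendsto_inv_smul_nhds_zero.congr fun i => ?_)
  have hne : v i - u i ≠ 0 := sub_ne_zero.2 (huv i).ne'
  rw [slope_def_module, smul_sub, smul_sub, smul_smul, inv_mul_cancel₀ hne, one_smul]

section Floor

variable {K : Type*} [Field K] [LinearOrder K] [IsStrictOrderedRing K] [FloorRing K]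

lemma floor_le_floor_two_mul_div_two (a : K) : (⌊a⌋ : K) ≤ ⌊2 * a⌋ / 2 := by
  have h : 2 * ⌊a⌋ ≤ ⌊2 * a⌋ := by
    rw [Int.le_floor]
    push_cast
    linarith [Int.floor_le a]
  rw [le_div_iff₀ two_pos, mul_comm]
  exact_mod_cast h

lemma floor_two_mul_add_one_div_two_le (a : K) : ((⌊2 * a⌋ : K) + 1) / 2 ≤ ⌊a⌋ + 1 := by
  have h : ⌊2 * a⌋ < 2 * ⌊a⌋ + 2 := by
    rw [Int.floor_lt]
    push_cast
    linarith [Int.lt_floor_add_one a]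
  rw [div_le_iff₀ two_pos]
  have h' : (⌊2 * a⌋ : K) + 1 ≤ 2 * ⌊a⌋ + 2 := by exact_mod_cast h
  linarith

end Floor

noncomputable def intDist (y : ℝ) : ℝ := |y - round y|

lemma intDist_nonneg (y : ℝ) : 0 ≤ intDist y := abs_nonneg _

lemma intDist_le_half (y : ℝ) : intDist y ≤ 1 / 2 := abs_sub_round y

@[simp] lemma intDist_intCast (k : ℤ) : intDist k = 0 := by
  simp [intDist]

lemma lipschitzWith_intDist : LipschitzWith 1 intDist :=
  LipschitzWith.of_le_add fun a b => by
    rw [Real.dist_eq]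
    calc intDist a ≤ |a - round b| := round_le a (round b)
      _ = |(a - b) + (b - round b)| := by ring_nf
      _ ≤ intDist b + |a - b| := by rw [add_comm (intDist b)]; exact abs_add_le _ _

lemma intDist_eq_abs_sub {t : ℝ} (k : ℤ) (h : |t - k| ≤ 1 / 2) : intDist t = |t - k| := by
  refine le_antisymm (round_le t k) ?_
  rcases eq_or_ne (round t) k with hk | hk
  · rw [intDist, hk]
  · have hone : (1 : ℝ) ≤ |(round t : ℝ) - k| := by
      exact_mod_cast Int.one_le_abs (sub_ne_zero.2 hk)
    have htri : |(round t : ℝ) - k| ≤ intDist t + |t - k| := by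
      rw [intDist, abs_sub_comm t]
      exact abs_sub_le _ _ _
    linarith

lemma intDist_sub_of_mem_Icc (j : ℤ) {u v : ℝ} (hu : u ∈ Set.Icc (j / 2 : ℝ) ((j + 1) / 2))
    (hv : v ∈ Set.Icc (j / 2 : ℝ) ((j + 1) / 2)) :
    intDist v - intDist u = (-1) ^ j * (v - u) := by
  obtain ⟨hu₁, hu₂⟩ := hu
  obtain ⟨hv₁, hv₂⟩ := hv
  rcases Int.even_or_odd' j with ⟨k, rfl | rfl⟩
  · push_cast at *
    rw [intDist_eq_abs_sub k (by rw [abs_le]; constructor <;> linarith),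
      intDist_eq_abs_sub k (by rw [abs_le]; constructor <;> linarith),
      abs_of_nonneg (by linarith), abs_of_nonneg (by linarith), Even.neg_one_zpow ⟨k, two_mul k⟩]
    ring
  · push_cast at *
    rw [intDist_eq_abs_sub (k + 1) (by push_cast; rw [abs_le]; constructor <;> linarith),
      intDist_eq_abs_sub (k + 1) (by push_cast; rw [abs_le]; constructor <;> linarith),
      abs_of_nonpos (by push_cast; linarith), abs_of_nonpos (by push_cast; linarith),
      Odd.neg_one_zpow ⟨k, rfl⟩]
    ring

noncomputable def takagi (x : ℝ) : ℝ := ∑' n : ℕ, intDist (2 ^ n * x) / 2 ^ n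

lemma norm_intDist_div_two_pow_le (n : ℕ) (y : ℝ) : ‖intDist y / 2 ^ n‖ ≤ (1 / 2) ^ n := by
  rw [Real.norm_eq_abs, abs_of_nonneg (by have := intDist_nonneg y; positivity), one_div_pow]
  gcongr
  linarith [intDist_le_half y]

lemma summable_takagi (x : ℝ) : Summable fun n : ℕ => intDist (2 ^ n * x) / 2 ^ n :=
  .of_norm_bounded summable_geometric_two fun n => norm_intDist_div_two_pow_le n _

lemma continuous_takagi : Continuous takagi :=
  continuous_tsum
    (fun _ => (lipschitzWith_intDist.continuous.comp (continuous_const_mul _)).div_const _)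
    summable_geometric_two fun n _ => norm_intDist_div_two_pow_le n _

noncomputable def dyadicLower (m : ℕ) (x : ℝ) : ℝ := ⌊2 ^ m * x⌋ / 2 ^ m

lemma dyadicLower_le (m : ℕ) (x : ℝ) : dyadicLower m x ≤ x := by
  rw [dyadicLower, div_le_iff₀' (by positivity)]
  exact Int.floor_le _

lemma lt_dyadicLower_add (m : ℕ) (x : ℝ) : x < dyadicLower m x + (2 ^ m)⁻¹ := by
  rw [dyadicLower, ← one_div, ← add_div, lt_div_iff₀' (by positivity)]
  exact Int.lt_floor_add_one _

lemma tendsto_two_pow_inv : Tendsto (fun m : ℕ => ((2 : ℝ) ^ m)⁻¹) atTop (𝓝 0) :=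
  tendsto_inv_atTop_zero.comp (tendsto_pow_atTop_atTop_of_one_lt one_lt_two)

lemma tendsto_dyadicLower (x : ℝ) : Tendsto (fun m => dyadicLower m x) atTop (𝓝 x) := by
  have hlow : Tendsto (fun m : ℕ => x - ((2 : ℝ) ^ m)⁻¹) atTop (𝓝 x) := by
    simpa using tendsto_two_pow_inv.const_sub x
  exact tendsto_of_tendsto_of_tendsto_of_le_of_le hlow tendsto_const_nhds
    (fun m => by linarith [lt_dyadicLower_add m x]) (dyadicLower_le · x)

lemma dyadicLower_succ (m : ℕ) (x : ℝ) :
    dyadicLower (m + 1) x = ⌊2 * (2 ^ m * x)⌋ / 2 / 2 ^ m := by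
  rw [dyadicLower, div_div, pow_succ', mul_assoc]

lemma monotone_dyadicLower (x : ℝ) : Monotone fun m => dyadicLower m x :=
  monotone_nat_of_le_succ fun m => by
    rw [dyadicLower_succ, dyadicLower]
    gcongr
    exact floor_le_floor_two_mul_div_two _

lemma dyadicLower_add_inv (m : ℕ) (x : ℝ) :
    dyadicLower m x + (2 ^ m)⁻¹ = (⌊2 ^ m * x⌋ + 1) / 2 ^ m := by
  rw [dyadicLower, add_div, one_div]

lemma antitone_dyadicLower_add (x : ℝ) : Antitone fun m => dyadicLower m x + (2 ^ m)⁻¹ :=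
  antitone_nat_of_succ_le fun m => by
    have h : (⌊2 ^ (m + 1) * x⌋ + 1) / 2 ^ (m + 1) =
        ((⌊2 * (2 ^ m * x)⌋ : ℝ) + 1) / 2 / 2 ^ m := by
      rw [div_div, pow_succ', mul_assoc]
    simp only [dyadicLower_add_inv, h]
    gcongr
    exact floor_two_mul_add_one_div_two_le _

lemma intDist_two_pow_mul_div_two_pow {m n : ℕ} (h : m ≤ n) (k : ℤ) :
    intDist (2 ^ n * (k / 2 ^ m)) = 0 := by
  obtain ⟨d, rfl⟩ := Nat.exists_eq_add_of_le h
  have hk : (2 : ℝ) ^ (m + d) * (k / 2 ^ m) = ((k * 2 ^ d : ℤ) : ℝ) := by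
    push_cast
    rw [pow_add]
    field_simp
  rw [hk, intDist_intCast]

lemma intDist_sub_of_lt {m n : ℕ} (h : n < m) (x : ℝ) :
    intDist (2 ^ n * (dyadicLower m x + (2 ^ m)⁻¹)) - intDist (2 ^ n * dyadicLower m x) =
      (-1) ^ ⌊2 ^ (n + 1) * x⌋ * (2 ^ n * (2 ^ m)⁻¹) := by
  have hlow : (⌊2 ^ (n + 1) * x⌋ : ℝ) / 2 ≤ 2 ^ n * dyadicLower m x :=
    calc (⌊2 ^ (n + 1) * x⌋ : ℝ) / 2 = 2 ^ n * dyadicLower (n + 1) x := by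
          rw [dyadicLower]; field_simp; ring
      _ ≤ 2 ^ n * dyadicLower m x := by gcongr; exact monotone_dyadicLower x h
  have hupp : 2 ^ n * (dyadicLower m x + (2 ^ m)⁻¹) ≤ (⌊2 ^ (n + 1) * x⌋ + 1) / 2 :=
    calc 2 ^ n * (dyadicLower m x + (2 ^ m)⁻¹)
        ≤ 2 ^ n * (dyadicLower (n + 1) x + (2 ^ (n + 1))⁻¹) :=
          mul_le_mul_of_nonneg_left (antitone_dyadicLower_add x h) (by positivity)
      _ = (⌊2 ^ (n + 1) * x⌋ + 1) / 2 := by rw [dyadicLower_add_inv]; field_simp; ring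
  have hinv : (0 : ℝ) ≤ 2 ^ n * (2 ^ m)⁻¹ := by positivity
  rw [intDist_sub_of_mem_Icc _ ⟨hlow, by linarith⟩ ⟨by linarith, hupp⟩]
  ring

lemma slope_takagi_dyadic (x : ℝ) (m : ℕ) :
    slope takagi (dyadicLower m x) (dyadicLower m x + (2 ^ m)⁻¹) =
      ∑ n ∈ range m, (-1 : ℝ) ^ ⌊2 ^ (n + 1) * x⌋ := by
  have hsub : takagi (dyadicLower m x + (2 ^ m)⁻¹) - takagi (dyadicLower m x) =
      ∑ n ∈ range m, (-1 : ℝ) ^ ⌊2 ^ (n + 1) * x⌋ * (2 ^ m)⁻¹ := by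
    rw [takagi, takagi, ← (summable_takagi _).tsum_sub (summable_takagi _),
      tsum_eq_sum (s := range m)]
    · refine sum_congr rfl fun n hn => ?_
      rw [← sub_div, intDist_sub_of_lt (mem_range.1 hn)]
      field_simp
    · intro n hn
      rw [dyadicLower_add_inv, dyadicLower, ← Int.cast_one, ← Int.cast_add,
        intDist_two_pow_mul_div_two_pow (not_lt.1 (mem_range.not.1 hn)),
        intDist_two_pow_mul_div_two_pow (not_lt.1 (mem_range.not.1 hn))]
      simp
  rw [slope_def_module, hsub, add_sub_cancel_left, ← sum_mul, smul_eq_mul, inv_inv,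
    mul_comm, inv_mul_cancel_right₀ (by positivity)]

theorem continuous_nowhere_differentiable :
    ∃ f : ℝ → ℝ, Continuous f ∧ ∀ x : ℝ, ¬ DifferentiableAt ℝ f x := by
  refine ⟨takagi, continuous_takagi, fun x hx => ?_⟩
  set S : ℕ → ℝ := fun m => ∑ n ∈ range m, (-1 : ℝ) ^ ⌊2 ^ (n + 1) * x⌋
  have hS : Tendsto S atTop (𝓝 (deriv takagi x)) := by
    have hupp : Tendsto (fun m => dyadicLower m x + (2 ^ m)⁻¹) atTop (𝓝 x) := by
      simpa using (tendsto_dyadicLower x).add tendsto_two_pow_inv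
    simpa only [slope_takagi_dyadic] using hx.hasDerivAt.tendsto_slope_of_straddle
      (tendsto_dyadicLower x) hupp (dyadicLower_le · x) (fun m => (lt_dyadicLower_add m x).le)
      (fun m => lt_add_of_pos_right _ (by positivity))
  have hstep : Tendsto (fun m => |S (m + 1) - S m|) atTop (𝓝 0) := by
    simpa using ((hS.comp (tendsto_add_atTop_nat 1)).sub hS).abs
  simp only [S, sum_range_succ, add_sub_cancel_left, abs_neg_one_zpow] at hstep
  exact one_ne_zero (tendsto_const_nhds_iff.1 hstep)
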